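/- arXiv:2410.05504 — 2 statements merged into one kernel-verified Lean document; each statement's English description precedes it below -/
import Mathlib

section
/- Sufficient condition for benefit from ambiguous communication: Let σ^BP be an obedient experiment with u_s(σ^BP, τ*) = u_s^BP. If there exists a Pareto-ranked splitting (σ̄, σ̲, λ) of σ^BP such that ρ^{φ_s,u_s}((σ̄, σ̲), λ) < μ̄ − λ, where μ̄ = λφ_r'(u_r(σ̲, τ*)) / [λφ_r'(u_r(σ̲, τ*)) + (1−λ)φ_r'(u_r(σ̄, τ*))], then there exists an obedient ambiguous experiment (σ, μ) with U_s(σ, μ, τ*) > u_s^BP. -/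
/-!
Present the two halves of the splitting of `σBP` as an ambiguous experiment with weights
`μbar, 1 - μbar`. Concavity of `φr` bounds the receiver's ambiguous objective by its
linearization at `τ*`; with the weight `μbar` this linearization is a positive multiple of the
receiver's payoff under `σBP`, so obedience of `σBP` yields ambiguous obedience. Unwinding the
probability premium, the sender's `φs`-value of the pair exceeds `φs(u_s^BP)` exactly when the
premium is below `μbar - lam`.
-/

open Finset

/-- A stochastic kernel from `X` to `Y`: each row `k x` is a probability vector on `Y`.
An experiment is a kernel from states `Ω` to messages; a receiver strategy is a kernel
from messages to actions `A`. -/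
def IsKernel {X Y : Type*} [Fintype Y] (k : X → Y → ℝ) : Prop :=
  (∀ x y, 0 ≤ k x y) ∧ ∀ x, ∑ y, k x y = 1

/-- A probability vector on a finite type. -/
def IsProb {Θ : Type*} [Fintype Θ] (μ : Θ → ℝ) : Prop :=
  (∀ θ, 0 ≤ μ θ) ∧ ∑ θ, μ θ = 1

/-- The obedient strategy `τ*`: take the recommended action with probability one. -/
noncomputable def tauStar {A : Type*} [DecidableEq A] : A → A → ℝ :=
  fun m a => if a = m then (1 : ℝ) else 0

/-- Expected payoff `u_i(σ, τ) = ∑_{ω,m,a} p(ω) σ(m|ω) τ(a|m) u_i(a,ω)`. -/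
noncomputable def expPayoff {Ω M A : Type*} [Fintype Ω] [Fintype M] [Fintype A]
    (p : Ω → ℝ) (u : A → Ω → ℝ) (σ : Ω → M → ℝ) (τ : M → A → ℝ) : ℝ :=
  ∑ ω, ∑ m, ∑ a, p ω * σ ω m * τ m a * u a ω

/-- Obedience of a single (unambiguous) canonical experiment: `τ*` is a best reply. -/
def Obedient {Ω A : Type*} [Fintype Ω] [Fintype A] [DecidableEq A]
    (p : Ω → ℝ) (ur : A → Ω → ℝ) (σ : Ω → A → ℝ) : Prop :=
  ∀ τ : A → A → ℝ, IsKernel τ → expPayoff p ur σ τ ≤ expPayoff p ur σ tauStar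

/-- Obedience of an ambiguous experiment `(σ, μ)` for a smooth-ambiguity receiver with
index `φr`:  `τ*` maximizes `τ ↦ U_r(σ, μ, τ) = φr⁻¹(∑_θ μ_θ φr(u_r(σ_θ, τ)))`; since `φr`
is strictly increasing this is equivalent to `τ*` maximizing `τ ↦ ∑_θ μ_θ φr(u_r(σ_θ, τ))`. -/
def AmbObedient {Ω A Θ : Type*} [Fintype Ω] [Fintype A] [DecidableEq A] [Fintype Θ]
    (φr : ℝ → ℝ) (p : Ω → ℝ) (ur : A → Ω → ℝ) (σ : Θ → Ω → A → ℝ) (μ : Θ → ℝ) : Prop :=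
  ∀ τ : A → A → ℝ, IsKernel τ →
    ∑ θ, μ θ * φr (expPayoff p ur (σ θ) τ) ≤ ∑ θ, μ θ * φr (expPayoff p ur (σ θ) tauStar)

/-- A smooth ambiguity index: strictly increasing, concave, differentiable. -/
def SmoothIndex (φ : ℝ → ℝ) : Prop :=
  StrictMono φ ∧ ConcaveOn ℝ Set.univ φ ∧ Differentiable ℝ φ

/-- Two experiments are (strictly) Pareto ranked: under obedience, sender and receiver
strictly rank them the same way. -/
def ParetoRanked {Ω A : Type*} [Fintype Ω] [Fintype A] [DecidableEq A]
    (p : Ω → ℝ) (us ur : A → Ω → ℝ) (σ σ' : Ω → A → ℝ) : Prop :=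
  (expPayoff p us σ' tauStar < expPayoff p us σ tauStar ∧
      expPayoff p ur σ' tauStar < expPayoff p ur σ tauStar) ∨
  (expPayoff p us σ tauStar < expPayoff p us σ' tauStar ∧
      expPayoff p ur σ tauStar < expPayoff p ur σ' tauStar)

/-- Two experiments are weakly Pareto ranked. -/
def WeaklyParetoRanked {Ω A : Type*} [Fintype Ω] [Fintype A] [DecidableEq A]
    (p : Ω → ℝ) (us ur : A → Ω → ℝ) (σ σ' : Ω → A → ℝ) : Prop :=
  (expPayoff p us σ' tauStar ≤ expPayoff p us σ tauStar ∧
      expPayoff p ur σ' tauStar ≤ expPayoff p ur σ tauStar) ∨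
  (expPayoff p us σ tauStar ≤ expPayoff p us σ' tauStar ∧
      expPayoff p ur σ tauStar ≤ expPayoff p ur σ' tauStar)

/-- Pointwise convex combination of two experiments. -/
noncomputable def mixExp {Ω A : Type*} (lam : ℝ) (σ1 σ2 : Ω → A → ℝ) : Ω → A → ℝ :=
  fun ω a => lam * σ1 ω a + (1 - lam) * σ2 ω a

/-- `(σbar, σlo, lam)` is a Pareto-ranked splitting of the experiment `σ`. -/
def ParetoRankedSplitting {Ω A : Type*} [Fintype Ω] [Fintype A] [DecidableEq A]
    (p : Ω → ℝ) (us ur : A → Ω → ℝ) (σbar σlo : Ω → A → ℝ) (lam : ℝ) (σ : Ω → A → ℝ) : Prop :=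
  IsKernel σbar ∧ IsKernel σlo ∧ lam ∈ Set.Ioo (0 : ℝ) 1 ∧
    mixExp lam σbar σlo = σ ∧ ParetoRanked p us ur σbar σlo

/-- The `((σbar, σlo), lam)`-probability premium of a player with utility `u` and index `φ`. -/
noncomputable def probPremium {Ω A : Type*} [Fintype Ω] [Fintype A] [DecidableEq A]
    (p : Ω → ℝ) (u : A → Ω → ℝ) (φ : ℝ → ℝ) (σbar σlo : Ω → A → ℝ) (lam : ℝ) : ℝ :=
  (φ (expPayoff p u (mixExp lam σbar σlo) tauStar) -
      lam * φ (expPayoff p u σbar tauStar) - (1 - lam) * φ (expPayoff p u σlo tauStar)) /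
    (φ (expPayoff p u σbar tauStar) - φ (expPayoff p u σlo tauStar))

/-- The set of `φs`-transformed sender values attainable by obedient ambiguous experiments;
the value of the sender's problem `(P)` equals `u` iff `φs u` is the least upper bound of
this set (since `φs` is continuous and strictly increasing). -/
def senderValues {Ω A : Type*} [Fintype Ω] [Fintype A] [DecidableEq A]
    (φs φr : ℝ → ℝ) (p : Ω → ℝ) (us ur : A → Ω → ℝ) : Set ℝ :=
  {x | ∃ (n : ℕ) (σ : Fin n → Ω → A → ℝ) (μ : Fin n → ℝ),
    (∀ j, IsKernel (σ j)) ∧ IsProb μ ∧ AmbObedient φr p ur σ μ ∧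
    x = ∑ j, μ j * φs (expPayoff p us (σ j) tauStar)}

/-- The set of feasible values of the auxiliary program `(Φ*(u))`: sums
`∑_θ λ_θ Φ_u(σ_θ)` over splittings `(λ_θ, σ_θ)` of obedient experiments, where
`Φ_u(σ) = (φs(u_s(σ,τ*)) − φs(u)) / φr'(u_r(σ,τ*))`. -/
def phiProgram {Ω A : Type*} [Fintype Ω] [Fintype A] [DecidableEq A]
    (φs φr : ℝ → ℝ) (p : Ω → ℝ) (us ur : A → Ω → ℝ) (u : ℝ) : Set ℝ :=
  {x | ∃ (n : ℕ) (σ : Fin n → Ω → A → ℝ) (lam : Fin n → ℝ),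
    (∀ j, IsKernel (σ j)) ∧ IsProb lam ∧
    Obedient p ur (fun ω a => ∑ j, lam j * σ j ω a) ∧
    x = ∑ j, lam j * ((φs (expPayoff p us (σ j) tauStar) - φs u) /
      deriv φr (expPayoff p ur (σ j) tauStar))}

lemma ConcaveOn.le_add_deriv_mul_sub {φ : ℝ → ℝ} (hc : ConcaveOn ℝ Set.univ φ)
    (hd : Differentiable ℝ φ) (x y : ℝ) : φ y ≤ φ x + deriv φ x * (y - x) := by
  rcases lt_trichotomy x y with hxy | rfl | hyx
  · have h := hc.slope_le_deriv (Set.mem_univ x) (Set.mem_univ y) hxy (hd x)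
    rw [slope_def_field, div_le_iff₀ (sub_pos.mpr hxy)] at h
    linarith
  · simp
  · have h := hc.deriv_le_slope (Set.mem_univ y) (Set.mem_univ x) hyx (hd x)
    rw [slope_def_field, le_div_iff₀ (sub_pos.mpr hyx)] at h
    linarith

lemma SmoothIndex.deriv_pos {φ : ℝ → ℝ} (hφ : SmoothIndex φ) (x : ℝ) : 0 < deriv φ x := by
  obtain ⟨hmono, hc, hd⟩ := hφ
  have htangent := hc.le_add_deriv_mul_sub hd x (x + 1)
  have hincr := hmono (lt_add_one x)
  rw [add_sub_cancel_left, mul_one] at htangent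
  linarith

lemma mul_add_one_sub_mul_pos {lam x y : ℝ} (hlam : lam ∈ Set.Icc 0 1) (hx : 0 < x)
    (hy : 0 < y) : 0 < lam * x + (1 - lam) * y := by
  obtain ⟨hlam0, hlam1⟩ := hlam
  rcases hlam0.eq_or_lt with rfl | hpos
  · simpa using hy
  · linarith [mul_pos hpos hx, mul_nonneg (sub_nonneg.mpr hlam1) hy.le]

lemma mul_div_mul_add_mem_Icc {lam x y : ℝ} (hlam : lam ∈ Set.Icc 0 1) (hx : 0 < x)
    (hy : 0 < y) : lam * x / (lam * x + (1 - lam) * y) ∈ Set.Icc 0 1 := by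
  have hden := mul_add_one_sub_mul_pos hlam hx hy
  have hrest : 0 ≤ (1 - lam) * y := mul_nonneg (sub_nonneg.mpr hlam.2) hy.le
  exact ⟨div_nonneg (mul_nonneg hlam.1 hx.le) hden.le, div_le_one_of_le₀ (by linarith) hden.le⟩

lemma isProb_pair {μ : ℝ} (hμ : μ ∈ Set.Icc 0 1) : IsProb ![μ, 1 - μ] := by
  refine ⟨fun θ => ?_, by simp [Fin.sum_univ_two]⟩
  fin_cases θ <;> simp [hμ.1, hμ.2]

lemma expPayoff_mixExp {Ω A : Type*} [Fintype Ω] [Fintype A]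
    (p : Ω → ℝ) (u : A → Ω → ℝ) (lam : ℝ) (σ1 σ2 : Ω → A → ℝ) (τ : A → A → ℝ) :
    expPayoff p u (mixExp lam σ1 σ2) τ
      = lam * expPayoff p u σ1 τ + (1 - lam) * expPayoff p u σ2 τ := by
  simp only [expPayoff, mixExp, mul_sum, ← sum_add_distrib]
  exact sum_congr rfl fun ω _ => sum_congr rfl fun m _ => sum_congr rfl fun a _ => by ring

section Obedience

variable {Ω A : Type*} [Fintype Ω] [Fintype A] [DecidableEq A]

lemma ambObedient_of_linearized {Θ : Type*} [Fintype Θ] {φ : ℝ → ℝ}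
    (hc : ConcaveOn ℝ Set.univ φ) (hd : Differentiable ℝ φ) (p : Ω → ℝ) (ur : A → Ω → ℝ)
    (σ : Θ → Ω → A → ℝ) {μ : Θ → ℝ} (hμ : ∀ θ, 0 ≤ μ θ)
    (hlin : ∀ τ : A → A → ℝ, IsKernel τ →
      ∑ θ, μ θ * deriv φ (expPayoff p ur (σ θ) tauStar) *
        (expPayoff p ur (σ θ) τ - expPayoff p ur (σ θ) tauStar) ≤ 0) :
    AmbObedient φ p ur σ μ := by
  intro τ hτ
  have htangent : ∀ θ, μ θ * φ (expPayoff p ur (σ θ) τ) ≤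
      μ θ * φ (expPayoff p ur (σ θ) tauStar) + μ θ * deriv φ (expPayoff p ur (σ θ) tauStar) *
        (expPayoff p ur (σ θ) τ - expPayoff p ur (σ θ) tauStar) := fun θ => by
    rw [mul_assoc, ← mul_add]
    exact mul_le_mul_of_nonneg_left (hc.le_add_deriv_mul_sub hd _ _) (hμ θ)
  calc ∑ θ, μ θ * φ (expPayoff p ur (σ θ) τ)
      ≤ ∑ θ, μ θ * φ (expPayoff p ur (σ θ) tauStar) + ∑ θ, μ θ *
          deriv φ (expPayoff p ur (σ θ) tauStar) *
            (expPayoff p ur (σ θ) τ - expPayoff p ur (σ θ) tauStar) := by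
        rw [← sum_add_distrib]
        exact sum_le_sum fun θ _ => htangent θ
    _ ≤ ∑ θ, μ θ * φ (expPayoff p ur (σ θ) tauStar) := by linarith [hlin τ hτ]

/-- `μ` is chosen so that `μ φ'(u_r(σ₁)) : (1 - μ) φ'(u_r(σ₂)) = lam : 1 - lam`, which makes the
linearized receiver problem a positive multiple of the one for `mixExp lam σ₁ σ₂`. -/
lemma ambObedient_pair_of_obedient_mixExp {φ : ℝ → ℝ} (hφ : SmoothIndex φ) (p : Ω → ℝ)
    (ur : A → Ω → ℝ) {σ₁ σ₂ : Ω → A → ℝ} {lam : ℝ} (hlam : lam ∈ Set.Icc 0 1)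
    (hobed : Obedient p ur (mixExp lam σ₁ σ₂)) {μ : ℝ}
    (hμ : μ = lam * deriv φ (expPayoff p ur σ₂ tauStar) /
      (lam * deriv φ (expPayoff p ur σ₂ tauStar) +
        (1 - lam) * deriv φ (expPayoff p ur σ₁ tauStar))) :
    AmbObedient φ p ur ![σ₁, σ₂] ![μ, 1 - μ] := by
  set d₁ := deriv φ (expPayoff p ur σ₁ tauStar)
  set d₂ := deriv φ (expPayoff p ur σ₂ tauStar)
  have hd₁ : 0 < d₁ := hφ.deriv_pos _
  have hd₂ : 0 < d₂ := hφ.deriv_pos _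
  have hμ01 : μ ∈ Set.Icc 0 1 := hμ ▸ mul_div_mul_add_mem_Icc hlam hd₂ hd₁
  have hden := mul_add_one_sub_mul_pos hlam hd₂ hd₁
  refine ambObedient_of_linearized hφ.2.1 hφ.2.2 p ur _ (isProb_pair hμ01).1 fun τ hτ => ?_
  have hmix := hobed τ hτ
  rw [expPayoff_mixExp, expPayoff_mixExp] at hmix
  have hrescale : μ * d₁ * (expPayoff p ur σ₁ τ - expPayoff p ur σ₁ tauStar) +
      (1 - μ) * d₂ * (expPayoff p ur σ₂ τ - expPayoff p ur σ₂ tauStar) =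
      d₁ * d₂ / (lam * d₂ + (1 - lam) * d₁) *
        ((lam * expPayoff p ur σ₁ τ + (1 - lam) * expPayoff p ur σ₂ τ) -
          (lam * expPayoff p ur σ₁ tauStar + (1 - lam) * expPayoff p ur σ₂ tauStar)) := by
    rw [hμ]
    field_simp
    ring
  simp only [Fin.sum_univ_two, Matrix.cons_val_zero, Matrix.cons_val_one]
  rw [hrescale]
  exact mul_nonpos_of_nonneg_of_nonpos (by positivity) (by linarith)

end Obedience

lemma probPremium_lt_sub_iff {Ω A : Type*} [Fintype Ω] [Fintype A] [DecidableEq A]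
    {p : Ω → ℝ} {u : A → Ω → ℝ} {φ : ℝ → ℝ} {σbar σlo : Ω → A → ℝ} {lam : ℝ} (μ : ℝ)
    (hrank : φ (expPayoff p u σlo tauStar) < φ (expPayoff p u σbar tauStar)) :
    probPremium p u φ σbar σlo lam < μ - lam ↔
      φ (expPayoff p u (mixExp lam σbar σlo) tauStar) <
        μ * φ (expPayoff p u σbar tauStar) + (1 - μ) * φ (expPayoff p u σlo tauStar) := by
  rw [probPremium, div_lt_iff₀ (sub_pos.mpr hrank)]
  constructor <;> intro h <;> linarith

theorem sufficient_condition_for_benefit_general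
    {Ω A : Type*} [Fintype Ω] [Fintype A] [DecidableEq A]
    (p : Ω → ℝ) (us ur : A → Ω → ℝ)
    (φs φr : ℝ → ℝ) (hφs : SmoothIndex φs) (hφr : SmoothIndex φr)
    (usBP : ℝ)
    (σBP : Ω → A → ℝ) (hobedBP : Obedient p ur σBP)
    (hval : expPayoff p us σBP tauStar = usBP)
    (σbar σlo : Ω → A → ℝ) (lam : ℝ)
    (hsplit : ParetoRankedSplitting p us ur σbar σlo lam σBP)
    (hs : expPayoff p us σlo tauStar < expPayoff p us σbar tauStar)
    (μbar : ℝ)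
    (hμbar : μbar = lam * deriv φr (expPayoff p ur σlo tauStar) /
      (lam * deriv φr (expPayoff p ur σlo tauStar) +
        (1 - lam) * deriv φr (expPayoff p ur σbar tauStar)))
    (hprem : probPremium p us φs σbar σlo lam < μbar - lam) :
    ∃ (n : ℕ) (σ : Fin n → Ω → A → ℝ) (μ : Fin n → ℝ),
      (∀ j, IsKernel (σ j)) ∧ IsProb μ ∧ AmbObedient φr p ur σ μ ∧
      φs usBP < ∑ j, μ j * φs (expPayoff p us (σ j) tauStar) := by
  obtain ⟨hkbar, hklo, hlam, hmix, -⟩ := hsplit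
  have hlam01 : lam ∈ Set.Icc 0 1 := Set.Ioo_subset_Icc_self hlam
  have hμbar01 : μbar ∈ Set.Icc 0 1 :=
    hμbar ▸ mul_div_mul_add_mem_Icc hlam01 (hφr.deriv_pos _) (hφr.deriv_pos _)
  refine ⟨2, ![σbar, σlo], ![μbar, 1 - μbar], Fin.forall_fin_two.mpr ⟨hkbar, hklo⟩,
    isProb_pair hμbar01,
    ambObedient_pair_of_obedient_mixExp hφr p ur hlam01 (hmix ▸ hobedBP) hμbar, ?_⟩
  simp only [Fin.sum_univ_two, Matrix.cons_val_zero, Matrix.cons_val_one]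
  rw [← hval, ← hmix]
  exact (probPremium_lt_sub_iff μbar (hφs.1 hs)).mp hprem

/-- Corollary 2: if an optimal Bayesian persuasion experiment `σBP` admits
a Pareto-ranked splitting `(σbar, σlo, lam)` (with `σbar` the better experiment) whose
sender probability premium is `< μbar − lam` for
`μbar = lam φr'(u_r(σlo,τ*)) / (lam φr'(u_r(σlo,τ*)) + (1−lam) φr'(u_r(σbar,τ*)))`, then
ambiguous communication benefits the sender: there is an obedient ambiguous experiment
with `U_s > u_s^BP` (stated via the strictly increasing `φs`). -/
theorem sufficient_condition_for_benefit
    {Ω A : Type*} [Fintype Ω] [Fintype A] [DecidableEq A]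
    (p : Ω → ℝ) (hp : IsProb p) (us ur : A → Ω → ℝ)
    (φs φr : ℝ → ℝ) (hφs : SmoothIndex φs) (hφr : SmoothIndex φr)
    (usBP : ℝ)
    (husBP : IsGreatest {x : ℝ | ∃ σ0 : Ω → A → ℝ,
      IsKernel σ0 ∧ Obedient p ur σ0 ∧ x = expPayoff p us σ0 tauStar} usBP)
    (σBP : Ω → A → ℝ) (hσBP : IsKernel σBP) (hobedBP : Obedient p ur σBP)
    (hval : expPayoff p us σBP tauStar = usBP)
    (σbar σlo : Ω → A → ℝ) (lam : ℝ)
    (hsplit : ParetoRankedSplitting p us ur σbar σlo lam σBP)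
    (hs : expPayoff p us σlo tauStar < expPayoff p us σbar tauStar)
    (μbar : ℝ)
    (hμbar : μbar = lam * deriv φr (expPayoff p ur σlo tauStar) /
      (lam * deriv φr (expPayoff p ur σlo tauStar) +
        (1 - lam) * deriv φr (expPayoff p ur σbar tauStar)))
    (hprem : probPremium p us φs σbar σlo lam < μbar - lam) :
    ∃ (n : ℕ) (σ : Fin n → Ω → A → ℝ) (μ : Fin n → ℝ),
      (∀ j, IsKernel (σ j)) ∧ IsProb μ ∧ AmbObedient φr p ur σ μ ∧
      φs usBP < ∑ j, μ j * φs (expPayoff p us (σ j) tauStar) :=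
  sufficient_condition_for_benefit_general p us ur φs φr hφs hφr usBP σBP hobedBP hval σbar σlo lam
    hsplit hs μbar hμbar hprem
end

section
/- Characterization of strict benefit via the auxiliary program: There exists an obedient ambiguous experiment (σ, μ) with U_s(σ, μ, τ*) > u_s^BP if, and only if, Φ*(u_s^BP) > 0, where Φ*(u) is the supremum of Σ_θ λ_θ Φ_u(σ_θ) over finite families (λ_θ, σ_θ) with λ_θ ≥ 0, Σ_θ λ_θ = 1, each σ_θ an experiment, and Σ_θ λ_θ σ_θ obedient, and Φ_u(σ) := (φ_s(u_s(σ,τ*)) − φ_s(u)) / φ_r'(u_r(σ,τ*)). (More generally, for every u ∈ ℝ, the value of (P) exceeds u if and only if Φ*(u) > 0.) -/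
/-!
Linearize the receiver's smooth-ambiguity objective around `τ*`. For concave differentiable
`φr`, the ambiguous experiment `(σ, μ)` is obedient iff the single experiment `∑ λ_θ σ_θ` is,
where `λ_θ ∝ μ_θ φr'(u_r(σ_θ, τ*))`: necessity is the first-order condition along the segment
from `τ*` to any `τ`, sufficiency is the tangent-line inequality. This tilt is a bijection between
the feasible sets of `(P)` and of `(Φ*(u))` (its inverse tilts by `1 / φr'`), and it rescales
`∑ μ_θ φs(u_s(σ_θ, τ*)) - φs u` by a positive factor into `∑ λ_θ Φ_u(σ_θ)`.
-/

open Finset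

lemma ConcaveOn.le_add_deriv_mul_sub_s16 {S : Set ℝ} {f : ℝ → ℝ} {x y : ℝ} (hf : ConcaveOn ℝ S f)
    (hx : x ∈ S) (hy : y ∈ S) (hfx : DifferentiableAt ℝ f x) :
    f y ≤ f x + deriv f x * (y - x) := by
  rcases lt_trichotomy y x with hyx | rfl | hxy
  · have h := hf.deriv_le_slope hy hx hyx hfx
    rw [slope_def_field, le_div_iff₀ (sub_pos.2 hyx)] at h
    linarith
  · simp
  · have h := hf.slope_le_deriv hx hy hxy hfx
    rw [slope_def_field, div_le_iff₀ (sub_pos.2 hxy)] at h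
    linarith

lemma HasDerivAt.nonpos_of_isMaxOn_Icc {g : ℝ → ℝ} {g' : ℝ} (hg : HasDerivAt g g' 0)
    (hmax : IsMaxOn g (Set.Icc 0 1) 0) : g' ≤ 0 := by
  have hcone : (1 : ℝ) ∈ posTangentConeAt (Set.Icc (0 : ℝ) 1) 0 :=
    mem_posTangentConeAt_of_segment_subset (by simp [segment_eq_Icc])
  simpa using hmax.localize.hasFDerivWithinAt_nonpos hg.hasDerivWithinAt.hasFDerivWithinAt hcone

section Weights

variable {Θ : Type*} [Fintype Θ] {μ : Θ → ℝ}

lemma IsProb.sum_mul_pos (hμ : IsProb μ) {d : Θ → ℝ} (hd : ∀ θ, 0 < d θ) :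
    0 < ∑ θ, μ θ * d θ := by
  obtain ⟨θ₀, -, hθ₀⟩ := exists_ne_zero_of_sum_ne_zero (hμ.2.trans_ne one_ne_zero)
  exact sum_pos' (fun θ _ => mul_nonneg (hμ.1 θ) (hd θ).le)
    ⟨θ₀, mem_univ _, mul_pos ((hμ.1 θ₀).lt_of_ne' hθ₀) (hd θ₀)⟩

lemma IsProb.sum_mul_sub_const (hμ : IsProb μ) (f : Θ → ℝ) (c : ℝ) :
    ∑ θ, μ θ * (f θ - c) = ∑ θ, μ θ * f θ - c := by
  simp only [mul_sub, sum_sub_distrib, ← sum_mul, hμ.2, one_mul]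

noncomputable def tilt (d μ : Θ → ℝ) : Θ → ℝ :=
  fun θ => μ θ * d θ / ∑ θ', μ θ' * d θ'

lemma sum_tilt_mul (d μ f : Θ → ℝ) :
    ∑ θ, tilt d μ θ * f θ = (∑ θ, μ θ * d θ * f θ) / ∑ θ, μ θ * d θ := by
  simp only [tilt, sum_div, div_mul_eq_mul_div]

lemma sum_tilt_mul_div (μ : Θ → ℝ) {d : Θ → ℝ} (hd : ∀ θ, d θ ≠ 0) (f : Θ → ℝ) :
    ∑ θ, tilt d μ θ * (f θ / d θ) = (∑ θ, μ θ * f θ) / ∑ θ, μ θ * d θ := by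
  rw [sum_tilt_mul]
  exact congrArg (· / _) (sum_congr rfl fun θ _ => by field_simp [hd θ])

lemma sum_tilt_inv_mul (d μ f : Θ → ℝ) :
    ∑ θ, tilt d⁻¹ μ θ * f θ = (∑ θ, μ θ * (f θ / d θ)) / ∑ θ, μ θ * d⁻¹ θ := by
  rw [sum_tilt_mul]
  exact congrArg (· / _) (sum_congr rfl fun θ _ => by simp only [Pi.inv_apply]; ring)

lemma isProb_tilt (hμ : IsProb μ) {d : Θ → ℝ} (hd : ∀ θ, 0 < d θ) : IsProb (tilt d μ) := by
  have hC := hμ.sum_mul_pos hd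
  refine ⟨fun θ => div_nonneg (mul_nonneg (hμ.1 θ) (hd θ).le) hC.le, ?_⟩
  simp only [tilt, ← sum_div]
  exact div_self hC.ne'

lemma tilt_tilt_inv (hμ : IsProb μ) {d : Θ → ℝ} (hd : ∀ θ, 0 < d θ) :
    tilt d (tilt d⁻¹ μ) = μ := by
  have hd' : ∀ θ, 0 < d⁻¹ θ := fun θ => inv_pos.2 (hd θ)
  have hN := hμ.sum_mul_pos hd'
  have hcancel : ∀ θ, tilt d⁻¹ μ θ * d θ = μ θ / ∑ θ', μ θ' * d⁻¹ θ' := fun θ => by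
    simp only [tilt, Pi.inv_apply]
    field_simp [(hd θ).ne']
  funext θ
  simp only [tilt] at hcancel ⊢
  rw [hcancel, sum_congr rfl fun θ _ => hcancel θ, ← sum_div, hμ.2,
    div_div_div_cancel_right₀ hN.ne', div_one]

end Weights

section Experiments

variable {Ω A Θ : Type*} [Fintype Ω] [Fintype A] [Fintype Θ]

lemma expPayoff_sum_smul_left {M : Type*} [Fintype M] (p : Ω → ℝ) (u : A → Ω → ℝ)
    (σ : Θ → Ω → M → ℝ) (lam : Θ → ℝ) (τ : M → A → ℝ) :
    expPayoff p u (fun ω m => ∑ θ, lam θ * σ θ ω m) τ = ∑ θ, lam θ * expPayoff p u (σ θ) τ := by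
  simp only [expPayoff, mul_sum, sum_mul]
  symm
  rw [sum_comm]; refine sum_congr rfl fun ω _ => ?_
  rw [sum_comm]; refine sum_congr rfl fun m _ => ?_
  rw [sum_comm]; exact sum_congr rfl fun a _ => sum_congr rfl fun θ _ => by ring

lemma expPayoff_add_smul_right {M : Type*} [Fintype M] (p : Ω → ℝ) (u : A → Ω → ℝ)
    (σ : Ω → M → ℝ) (τ₁ τ₂ : M → A → ℝ) (c₁ c₂ : ℝ) :
    expPayoff p u σ (fun m a => c₁ * τ₁ m a + c₂ * τ₂ m a)
      = c₁ * expPayoff p u σ τ₁ + c₂ * expPayoff p u σ τ₂ := by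
  simp only [expPayoff, mul_sum, ← sum_add_distrib]
  refine sum_congr rfl fun ω _ => sum_congr rfl fun m _ => sum_congr rfl fun a _ => by ring

lemma IsKernel.combo {X Y : Type*} [Fintype Y] {k₁ k₂ : X → Y → ℝ} (h₁ : IsKernel k₁)
    (h₂ : IsKernel k₂) {t : ℝ} (ht : t ∈ Set.Icc (0 : ℝ) 1) :
    IsKernel (fun x y => (1 - t) * k₁ x y + t * k₂ x y) := by
  refine ⟨fun x y => add_nonneg (mul_nonneg (by linarith [ht.2]) (h₁.1 x y))
    (mul_nonneg ht.1 (h₂.1 x y)), fun x => ?_⟩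
  rw [sum_add_distrib, ← mul_sum, ← mul_sum, h₁.2 x, h₂.2 x]
  ring

variable [DecidableEq A]

lemma isKernel_tauStar : IsKernel (tauStar (A := A)) :=
  ⟨fun m a => by unfold tauStar; split_ifs <;> norm_num, fun m => by simp [tauStar]⟩

lemma obedient_sum_smul_iff (p : Ω → ℝ) (ur : A → Ω → ℝ) (σ : Θ → Ω → A → ℝ) (lam : Θ → ℝ) :
    Obedient p ur (fun ω a => ∑ θ, lam θ * σ θ ω a) ↔ ∀ τ, IsKernel τ →
      ∑ θ, lam θ * expPayoff p ur (σ θ) τ ≤ ∑ θ, lam θ * expPayoff p ur (σ θ) tauStar := by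
  simp only [Obedient, expPayoff_sum_smul_left]

end Experiments

section Obedience

variable {Ω A Θ : Type*} [Fintype Ω] [Fintype A] [DecidableEq A] [Fintype Θ]
  {φr : ℝ → ℝ} {p : Ω → ℝ} {ur : A → Ω → ℝ} {σ : Θ → Ω → A → ℝ} {μ : Θ → ℝ}

theorem ambObedient_iff_sum_deriv_mul_le (hc : ConcaveOn ℝ Set.univ φr)
    (hd : Differentiable ℝ φr) (hμ : ∀ θ, 0 ≤ μ θ) :
    AmbObedient φr p ur σ μ ↔ ∀ τ, IsKernel τ →
      ∑ θ, μ θ * deriv φr (expPayoff p ur (σ θ) tauStar) * expPayoff p ur (σ θ) τ ≤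
        ∑ θ, μ θ * deriv φr (expPayoff p ur (σ θ) tauStar) * expPayoff p ur (σ θ) tauStar := by
  set w := fun θ => expPayoff p ur (σ θ) tauStar
  constructor
  · intro h τ hτ
    set v := fun θ => expPayoff p ur (σ θ) τ
    have hline : ∀ θ t, expPayoff p ur (σ θ) (fun m a => (1 - t) * tauStar m a + t * τ m a)
        = w θ + t * (v θ - w θ) := fun θ t => by rw [expPayoff_add_smul_right]; ring
    have hderiv : HasDerivAt (fun t => ∑ θ, μ θ * φr (w θ + t * (v θ - w θ)))
        (∑ θ, μ θ * (deriv φr (w θ) * (v θ - w θ))) 0 := by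
      refine HasDerivAt.fun_sum fun θ _ => HasDerivAt.const_mul _ ?_
      have hseg : HasDerivAt (fun t => w θ + t * (v θ - w θ)) (v θ - w θ) 0 := by
        simpa using ((hasDerivAt_id 0).mul_const (v θ - w θ)).const_add (w θ)
      exact (hd (w θ)).hasDerivAt.comp_of_eq 0 hseg (by simp)
    have hmax : IsMaxOn (fun t => ∑ θ, μ θ * φr (w θ + t * (v θ - w θ))) (Set.Icc 0 1) 0 :=
      fun t ht => by simpa [hline] using h _ (isKernel_tauStar.combo hτ ht)
    have hfoc := hderiv.nonpos_of_isMaxOn_Icc hmax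
    have hsplit : ∑ θ, μ θ * (deriv φr (w θ) * (v θ - w θ))
        = ∑ θ, μ θ * deriv φr (w θ) * v θ - ∑ θ, μ θ * deriv φr (w θ) * w θ := by
      rw [← sum_sub_distrib]
      exact sum_congr rfl fun θ _ => by ring
    linarith
  · intro h τ hτ
    set v := fun θ => expPayoff p ur (σ θ) τ
    have htangent : ∀ θ, φr (v θ) ≤ φr (w θ) + deriv φr (w θ) * (v θ - w θ) := fun θ =>
      hc.le_add_deriv_mul_sub_s16 trivial trivial (hd _)
    calc ∑ θ, μ θ * φr (v θ)
        ≤ ∑ θ, μ θ * (φr (w θ) + deriv φr (w θ) * (v θ - w θ)) :=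
          sum_le_sum fun θ _ => mul_le_mul_of_nonneg_left (htangent θ) (hμ θ)
      _ = ∑ θ, μ θ * φr (w θ) +
            (∑ θ, μ θ * deriv φr (w θ) * v θ - ∑ θ, μ θ * deriv φr (w θ) * w θ) := by
          rw [← sum_sub_distrib, ← sum_add_distrib]
          exact sum_congr rfl fun θ _ => by ring
      _ ≤ ∑ θ, μ θ * φr (w θ) := by linarith [h τ hτ]

theorem ambObedient_iff_obedient_tilt (hc : ConcaveOn ℝ Set.univ φr) (hd : Differentiable ℝ φr)
    (hd' : ∀ x, 0 < deriv φr x) (hμ : IsProb μ) :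
    AmbObedient φr p ur σ μ ↔ Obedient p ur (fun ω a =>
      ∑ θ, tilt (fun θ => deriv φr (expPayoff p ur (σ θ) tauStar)) μ θ * σ θ ω a) := by
  rw [ambObedient_iff_sum_deriv_mul_le hc hd hμ.1, obedient_sum_smul_iff]
  simp only [sum_tilt_mul, div_le_div_iff_of_pos_right (hμ.sum_mul_pos fun θ => hd' _)]

end Obedience

theorem strict_benefit_characterization_general
    {Ω A : Type*} [Fintype Ω] [Fintype A] [DecidableEq A]
    (p : Ω → ℝ) (us ur : A → Ω → ℝ)
    (φs φr : ℝ → ℝ) (hφr : SmoothIndex φr)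
    (hφr' : ∀ x, 0 < deriv φr x)
    (usBP : ℝ) :
    ((∃ x ∈ senderValues φs φr p us ur, φs usBP < x) ↔
      ∃ y ∈ phiProgram φs φr p us ur usBP, 0 < y) ∧
    (∀ u : ℝ, (∃ x ∈ senderValues φs φr p us ur, φs u < x) ↔
      ∃ y ∈ phiProgram φs φr p us ur u, 0 < y) := by
  suffices h : ∀ u : ℝ, (∃ x ∈ senderValues φs φr p us ur, φs u < x) ↔
      ∃ y ∈ phiProgram φs φr p us ur u, 0 < y from ⟨h usBP, h⟩
  intro u
  obtain ⟨-, hconc, hdiff⟩ := hφr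
  constructor
  · rintro ⟨_, ⟨n, σ, μ, hσ, hμ, hobed, rfl⟩, hx⟩
    set d := fun j => deriv φr (expPayoff p ur (σ j) tauStar)
    have hd : ∀ j, 0 < d j := fun j => hφr' _
    have hobed_tilt := (ambObedient_iff_obedient_tilt hconc hdiff hφr' hμ).1 hobed
    refine ⟨_, ⟨n, σ, tilt d μ, hσ, isProb_tilt hμ hd, hobed_tilt, rfl⟩, ?_⟩
    rw [sum_tilt_mul_div _ (fun j => (hd j).ne'), hμ.sum_mul_sub_const]
    exact div_pos (sub_pos.2 hx) (hμ.sum_mul_pos hd)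
  · rintro ⟨_, ⟨n, σ, lam, hσ, hlam, hobed, rfl⟩, hy⟩
    set d := fun j => deriv φr (expPayoff p ur (σ j) tauStar)
    have hd : ∀ j, 0 < d j := fun j => hφr' _
    have hd_inv : ∀ j, 0 < d⁻¹ j := fun j => inv_pos.2 (hd j)
    have hμ := isProb_tilt hlam hd_inv
    refine ⟨_, ⟨n, σ, tilt d⁻¹ lam, hσ, hμ, ?_, rfl⟩, ?_⟩
    · rwa [ambObedient_iff_obedient_tilt hconc hdiff hφr' hμ, tilt_tilt_inv hlam hd]
    have hgain := hμ.sum_mul_sub_const (fun j => φs (expPayoff p us (σ j) tauStar)) (φs u)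
    rw [sum_tilt_inv_mul] at hgain
    linarith [div_pos hy (hlam.sum_mul_pos hd_inv)]

/-- Corollary 5 / Lemma A.2: ambiguous communication benefits the sender —
some obedient ambiguous experiment has `U_s > u_s^BP` (equivalently, some element of the
`φs`-transformed sender-value set exceeds `φs u_s^BP`) — iff the program `(Φ*(u_s^BP))`
has value `> 0` (equivalently, some feasible value is `> 0`).  More generally, for every
`u`, the value of `(P)` exceeds `u` iff `Φ*(u) > 0`. -/
theorem strict_benefit_characterization
    {Ω A : Type*} [Fintype Ω] [Fintype A] [DecidableEq A]
    (p : Ω → ℝ) (hp : IsProb p) (us ur : A → Ω → ℝ)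
    (φs φr : ℝ → ℝ) (hφs : SmoothIndex φs) (hφr : SmoothIndex φr)
    (hφr' : ∀ x, 0 < deriv φr x)
    (usBP : ℝ)
    (husBP : IsGreatest {x : ℝ | ∃ σ0 : Ω → A → ℝ,
      IsKernel σ0 ∧ Obedient p ur σ0 ∧ x = expPayoff p us σ0 tauStar} usBP) :
    ((∃ x ∈ senderValues φs φr p us ur, φs usBP < x) ↔
      ∃ y ∈ phiProgram φs φr p us ur usBP, 0 < y) ∧
    (∀ u : ℝ, (∃ x ∈ senderValues φs φr p us ur, φs u < x) ↔
      ∃ y ∈ phiProgram φs φr p us ur u, 0 < y) :=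
  strict_benefit_characterization_general p us ur φs φr hφr hφr' usBP
end
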